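/- Assume H is connected and ∑_{v∈V} s_v = 0. Then the feasible set {η∈𝓨 : Bη = s} is nonempty, the dual objective 𝓓 attains its minimum over this set, the Poisson objective 𝓟 attains its minimum over 𝓧₀, and strong duality holds in the form min_{x∈𝓧₀} 𝓟(x) = − min{ 𝓓(η) : η∈𝓨, Bη = s }. -/

import Mathlib

/-!
Weak duality is an edge-by-edge inequality: for `η_e ∈ U_e` one has
`⟨η_e, x⟩ ≤ ‖η_e‖₁ R_e(x) / 2`, and AM-GM bounds the resulting quadratic in `R_e(x)`
below by `-‖η_e‖₁² / (8 w_e)`.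

Since `∑ s = 0`, `𝓟` is invariant under adding constants, and by connectivity the energy is
coercive on `{x | x v₀ = 0}`; so `𝓟` has a global minimiser, which can be shifted into
`𝓧₀`. At a minimiser `x`, the demand `s` lies in `B(∏_e K_e)`, where `K_e` is the convex hull
of the vectors `w_e R_e(x) (𝟙_a - 𝟙_b)` with `a` a maximiser and `b` a minimiser of `x` on
`e`: otherwise a functional `y` separating `s` from this compact convex set is a direction
along which the one-sided derivative of `𝓟` at `x` is negative. Every `η_e ∈ K_e` satisfies
`⟨η_e, x⟩ = w_e R_e(x)²` and `‖η_e‖₁ ≤ 2 w_e R_e(x)`, which gives `𝓟(x) ≤ -𝓓(η)`.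
-/

open Finset

section

variable {V : Type*} [Fintype V] [DecidableEq V] [Nonempty V]
variable {E : Type*} [Fintype E]

/-- The edge range `R_e(x) = max_{u∈e} x_u - min_{v∈e} x_v`. -/
noncomputable def eRange (edge : E → Finset V) (hne : ∀ e, (edge e).Nonempty)
    (x : V → ℝ) (e : E) : ℝ :=
  (edge e).sup' (hne e) x - (edge e).inf' (hne e) x

/-- The ℓ¹ norm on ℝ^V. -/
def l1norm (η : V → ℝ) : ℝ := ∑ v, |η v|

/-- Membership in `U_e`: supported on `e` and zero-sum. -/
def memUe (edge : E → Finset V) (e : E) (η : V → ℝ) : Prop :=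
  (∀ v, v ∉ edge e → η v = 0) ∧ ∑ v, η v = 0

/-- Membership in `𝓨 = ∏_e U_e`. -/
def memY (edge : E → Finset V) (η : E → V → ℝ) : Prop := ∀ e, memUe edge e (η e)

/-- The aggregation map `Bη = ∑_e η_e`. -/
def Bmap (η : E → V → ℝ) : V → ℝ := fun v => ∑ e, η e v

/-- The dual objective `𝓓(η) = ∑_e ‖η_e‖₁²/(8 w_e)`. -/
noncomputable def Dobj (w : E → ℝ) (η : E → V → ℝ) : ℝ :=
  ∑ e, (l1norm (η e)) ^ 2 / (8 * w e)

/-- Weighted degree `d_v = ∑_{e ∋ v} w_e`. -/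
noncomputable def degw (edge : E → Finset V) (w : E → ℝ) (v : V) : ℝ :=
  ∑ e ∈ univ.filter (fun e => v ∈ edge e), w e

/-- Membership in `𝓧₀`: weighted zero-mean. -/
def memX0 (edge : E → Finset V) (w : E → ℝ) (x : V → ℝ) : Prop :=
  ∑ v, degw edge w v * x v = 0

/-- The energy `𝓔_H(x)`. -/
noncomputable def energyH (edge : E → Finset V) (hne : ∀ e, (edge e).Nonempty)
    (w : E → ℝ) (x : V → ℝ) : ℝ :=
  (1 / 2) * ∑ e, w e * (eRange edge hne x e) ^ 2

/-- The Poisson objective `𝓟(x) = 𝓔_H(x) - ⟨s,x⟩`. -/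
noncomputable def Pobj (edge : E → Finset V) (hne : ∀ e, (edge e).Nonempty)
    (w : E → ℝ) (s : V → ℝ) (x : V → ℝ) : ℝ :=
  energyH edge hne w x - ∑ v, s v * x v

/-- Connectivity of the hypergraph. -/
def HConn (edge : E → Finset V) : Prop :=
  ∀ u v : V, ∃ (k : ℕ) (p : Fin (k + 1) → V) (c : Fin k → E),
    p 0 = u ∧ p (Fin.last k) = v ∧
    ∀ i : Fin k, p i.castSucc ∈ edge (c i) ∧ p i.succ ∈ edge (c i)

end

open Filter Topology

theorem Finset.exists_max_image_of_exists {ι α : Type*} [LinearOrder α] (s : Finset ι)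
    (p : ι → Prop) [DecidablePred p] (f : ι → α) (h : ∃ a ∈ s, p a) :
    ∃ a ∈ s, p a ∧ ∀ u ∈ s, p u → f u ≤ f a := by
  obtain ⟨a, ha, hmax⟩ := (s.filter p).exists_max_image f (by simpa [Finset.Nonempty] using h)
  rw [mem_filter] at ha
  exact ⟨a, ha.1, ha.2, fun u hu hpu => hmax u (mem_filter.2 ⟨hu, hpu⟩)⟩

theorem Finset.eventually_add_mul_le {ι : Type*} (s : Finset ι) {x y : ι → ℝ} {M c : ℝ}
    (hx : ∀ u ∈ s, x u ≤ M) (hy : ∀ u ∈ s, x u = M → y u ≤ c) :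
    ∀ᶠ t in 𝓝[>] (0 : ℝ), ∀ u ∈ s, x u + t * y u ≤ M + t * c := by
  rw [eventually_all_finset]
  intro u hu
  rcases (hx u hu).lt_or_eq with hlt | heq
  · have hnear : ∀ᶠ t in 𝓝 (0 : ℝ), x u + t * y u < M + t * c :=
      ContinuousAt.eventually_lt (by fun_prop) (by fun_prop) (by simpa using hlt)
    exact (hnear.filter_mono nhdsWithin_le_nhds).mono fun _ ht => ht.le
  · filter_upwards [self_mem_nhdsWithin] with t (ht : 0 < t)
    rw [heq]
    gcongr
    exact hy u hu heq

section Hypergraph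

variable {V E : Type*} {edge : E → Finset V} {hne : ∀ e, (edge e).Nonempty} {w : E → ℝ}

theorem HConn.eq_of_forall_mem_edge {β : Type*} (hconn : HConn edge) {x : V → β}
    (hx : ∀ e, ∀ a ∈ edge e, ∀ b ∈ edge e, x a = x b) (u v : V) : x u = x v := by
  obtain ⟨k, p, c, rfl, rfl, hp⟩ := hconn u v
  have hconst : ∀ i, x (p i) = x (p 0) := by
    intro i
    induction i using Fin.induction with
    | zero => rfl
    | succ i ih => rw [← ih]; exact hx (c i) _ (hp i).2 _ (hp i).1
  exact (hconst _).symm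

theorem eRange_nonneg (x : V → ℝ) (e : E) : 0 ≤ eRange edge hne x e := by
  obtain ⟨u, hu⟩ := hne e
  exact sub_nonneg.2 ((inf'_le x hu).trans (le_sup' x hu))

theorem eRange_affine {c : ℝ} (hc : 0 ≤ c) (d : ℝ) (x : V → ℝ) (e : E) :
    eRange edge hne (fun u => c * x u + d) e = c * eRange edge hne x e := by
  let f : ℝ →o ℝ := ⟨fun t => c * t + d, fun a b h => by dsimp only; gcongr⟩
  change (edge e).sup' (hne e) (f ∘ x) - (edge e).inf' (hne e) (f ∘ x) = _
  rw [← map_finset_sup' f, ← map_finset_inf' f, eRange]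
  change c * _ + d - (c * _ + d) = _
  ring

theorem continuous_eRange (e : E) : Continuous fun x : V → ℝ => eRange edge hne x e :=
  (Continuous.finset_sup'_apply (hne e) fun u _ => continuous_apply u).sub
    (Continuous.finset_inf'_apply (hne e) fun u _ => continuous_apply u)

theorem eventually_eRange_add_smul_le {x y : V → ℝ} {e : E} {a b : V}
    (ha : ∀ u ∈ edge e, x u = (edge e).sup' (hne e) x → y u ≤ y a)
    (hb : ∀ u ∈ edge e, x u = (edge e).inf' (hne e) x → y b ≤ y u) :
    ∀ᶠ t in 𝓝[>] (0 : ℝ),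
      eRange edge hne (x + t • y) e ≤ eRange edge hne x e + t * (y a - y b) := by
  have hsup := (edge e).eventually_add_mul_le (fun u hu => le_sup' x hu) ha
  have hinf := (edge e).eventually_add_mul_le (x := -x) (y := -y) (c := -y b)
    (fun u hu => neg_le_neg (inf'_le x hu)) fun u hu h => neg_le_neg (hb u hu (neg_inj.1 h))
  filter_upwards [hsup, hinf] with t hsup hinf
  have h₁ : (edge e).sup' (hne e) (x + t • y) ≤ (edge e).sup' (hne e) x + t * y a :=
    sup'_le _ _ hsup
  have h₂ : (edge e).inf' (hne e) x + t * y b ≤ (edge e).inf' (hne e) (x + t • y) :=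
    le_inf' _ _ fun u hu => by
      have := hinf u hu
      simp only [Pi.neg_apply, Pi.add_apply, Pi.smul_apply, smul_eq_mul] at this ⊢
      linarith
  unfold eRange
  linarith

theorem sum_mul_le_l1norm_mul_eRange [Fintype V] {e : E} {η : V → ℝ} (hη : memUe edge e η)
    (x : V → ℝ) :
    ∑ v, η v * x v ≤ l1norm η / 2 * eRange edge hne x e := by
  set M := (edge e).sup' (hne e) x
  set m := (edge e).inf' (hne e) x
  -- Since `∑ η = 0` we may recentre `x` at the midpoint of its range on `e`.
  have hcentre : ∑ v, η v * x v = ∑ v, η v * (x v - (M + m) / 2) := by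
    simp only [mul_sub, sum_sub_distrib, ← sum_mul, hη.2, zero_mul, sub_zero]
  rw [hcentre, l1norm, div_mul_eq_mul_div, sum_mul, sum_div]
  refine sum_le_sum fun v _ => ?_
  by_cases hv : v ∈ edge e
  · have h : |x v - (M + m) / 2| ≤ (M - m) / 2 := by
      rw [abs_le]
      constructor <;> linarith [le_sup' x hv, inf'_le x hv]
    calc η v * (x v - (M + m) / 2) ≤ |η v| * |x v - (M + m) / 2| := by
          rw [← abs_mul]; exact le_abs_self _
      _ ≤ |η v| * ((M - m) / 2) := by gcongr
      _ = |η v| * eRange edge hne x e / 2 := by rw [eRange]; ring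
  · simp [hη.1 v hv]

/-- The subdifferential of `x ↦ w e * eRange edge hne x e ^ 2 / 2` at `x`. -/
def dualCell [Fintype V] (edge : E → Finset V) (hne : ∀ e, (edge e).Nonempty) (w : E → ℝ)
    (x : V → ℝ) (e : E) : Set (V → ℝ) :=
  {η | memUe edge e η ∧ ∑ v, η v * x v = w e * eRange edge hne x e ^ 2 ∧
    l1norm η ≤ 2 * (w e * eRange edge hne x e)}

theorem convex_dualCell [Fintype V] (x : V → ℝ) (e : E) :
    Convex ℝ (dualCell edge hne w x e) := by
  rintro η ⟨⟨hη₀, hη₁⟩, hη₂, hη₃⟩ ζ ⟨⟨hζ₀, hζ₁⟩, hζ₂, hζ₃⟩ a b ha hb hab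
  refine ⟨⟨fun v hv => by simp [hη₀ v hv, hζ₀ v hv], ?_⟩, ?_, ?_⟩
  · simp [sum_add_distrib, ← mul_sum, hη₁, hζ₁]
  · simp only [Pi.add_apply, Pi.smul_apply, smul_eq_mul, add_mul, sum_add_distrib, mul_assoc,
      ← mul_sum, hη₂, hζ₂]
    rw [← add_mul, hab, one_mul]
  · calc l1norm (a • η + b • ζ) ≤ a * l1norm η + b * l1norm ζ := by
          simp only [l1norm, mul_sum, ← sum_add_distrib]
          refine sum_le_sum fun v _ => (abs_add_le _ _).trans_eq ?_
          simp [abs_mul, abs_of_nonneg ha, abs_of_nonneg hb]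
      _ ≤ a * (2 * (w e * eRange edge hne x e)) + b * (2 * (w e * eRange edge hne x e)) := by
          gcongr
      _ = 2 * (w e * eRange edge hne x e) := by rw [← add_mul, hab, one_mul]

theorem sum_smul_single_sub_single_mul [Fintype V] [DecidableEq V] (c : ℝ) (a b : V)
    (z : V → ℝ) :
    ∑ v, (c • (Pi.single a 1 - Pi.single b 1) : V → ℝ) v * z v = c * (z a - z b) := by
  simp [Pi.single_apply, sub_mul, mul_sub]

/-- The extreme points of `dualCell`. -/
def dualGenerators [DecidableEq V] (edge : E → Finset V) (hne : ∀ e, (edge e).Nonempty)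
    (w : E → ℝ) (x : V → ℝ) (e : E) : Set (V → ℝ) :=
  {η | ∃ a ∈ edge e, ∃ b ∈ edge e, x a = (edge e).sup' (hne e) x ∧
    x b = (edge e).inf' (hne e) x ∧
    η = (w e * eRange edge hne x e) • (Pi.single a 1 - Pi.single b 1)}

theorem finite_dualGenerators [DecidableEq V] (x : V → ℝ) (e : E) :
    (dualGenerators edge hne w x e).Finite :=
  ((edge e ×ˢ edge e).finite_toSet.image fun p : V × V =>
      (w e * eRange edge hne x e) • (Pi.single p.1 1 - Pi.single p.2 1 : V → ℝ)).subset
    fun _ ⟨a, ha, b, hb, _, _, hη⟩ => ⟨(a, b), by simp [ha, hb], hη.symm⟩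

theorem dualGenerators_subset_dualCell [Fintype V] [DecidableEq V] (hw : ∀ e, 0 ≤ w e)
    (x : V → ℝ) (e : E) :
    dualGenerators edge hne w x e ⊆ dualCell edge hne w x e := by
  rintro _ ⟨a, ha, b, hb, hxa, hxb, rfl⟩
  have hc : 0 ≤ w e * eRange edge hne x e := mul_nonneg (hw e) (eRange_nonneg x e)
  refine ⟨⟨fun v hv => ?_, ?_⟩, ?_, ?_⟩
  · have hva : v ≠ a := ne_of_mem_of_not_mem ha hv |>.symm
    have hvb : v ≠ b := ne_of_mem_of_not_mem hb hv |>.symm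
    simp [hva, hvb]
  · simpa using sum_smul_single_sub_single_mul (w e * eRange edge hne x e) a b 1
  · rw [sum_smul_single_sub_single_mul, hxa, hxb, eRange]
    ring
  · have hsingle : ∀ c : V, 0 ≤ (Pi.single c 1 : V → ℝ) := fun _ =>
      Pi.single_nonneg.2 zero_le_one
    calc l1norm ((w e * eRange edge hne x e) • (Pi.single a 1 - Pi.single b 1 : V → ℝ))
        ≤ ∑ v, w e * eRange edge hne x e *
            ((Pi.single a 1 : V → ℝ) v + (Pi.single b 1 : V → ℝ) v) := by
          refine sum_le_sum fun v _ => ?_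
          rw [Pi.smul_apply, smul_eq_mul, abs_mul, abs_of_nonneg hc]
          gcongr
          refine (abs_sub _ _).trans_eq ?_
          rw [abs_of_nonneg (hsingle a v), abs_of_nonneg (hsingle b v)]
      _ = 2 * (w e * eRange edge hne x e) := by
          simp only [← mul_sum, sum_add_distrib, sum_pi_single']
          simp
          ring

variable [Fintype E]

theorem energyH_nonneg (hw : ∀ e, 0 ≤ w e) (x : V → ℝ) : 0 ≤ energyH edge hne w x :=
  mul_nonneg (by norm_num) (sum_nonneg fun e _ => mul_nonneg (hw e) (sq_nonneg _))

theorem energyH_affine {c : ℝ} (hc : 0 ≤ c) (d : ℝ) (x : V → ℝ) :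
    energyH edge hne w (fun u => c * x u + d) = c ^ 2 * energyH edge hne w x := by
  simp only [energyH, eRange_affine hc, mul_sum]
  exact sum_congr rfl fun e _ => by ring

theorem continuous_energyH : Continuous (energyH edge hne w) :=
  continuous_const.mul <| continuous_finsetSum _ fun e _ =>
    continuous_const.mul ((continuous_eRange e).pow 2)

theorem energyH_le_of_eRange_le (hw : ∀ e, 0 ≤ w e) {x : V → ℝ} {r : E → ℝ}
    (hr : ∀ e, eRange edge hne x e ≤ r e) :
    energyH edge hne w x ≤ 1 / 2 * ∑ e, w e * r e ^ 2 := by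
  unfold energyH
  gcongr with e
  · exact hw e
  · exact eRange_nonneg x e
  · exact hr e

theorem eRange_eq_zero_of_energyH_eq_zero (hw : ∀ e, 0 < w e) {x : V → ℝ}
    (hx : energyH edge hne w x = 0) (e : E) : eRange edge hne x e = 0 := by
  have hsum : ∑ e, w e * eRange edge hne x e ^ 2 = 0 := by
    unfold energyH at hx
    linarith
  have := (sum_eq_zero_iff_of_nonneg fun e _ => mul_nonneg (hw e).le (sq_nonneg _)).1 hsum e
    (mem_univ e)
  simpa [(hw e).ne'] using this

theorem HConn.eq_of_energyH_eq_zero (hconn : HConn edge) (hw : ∀ e, 0 < w e) {x : V → ℝ}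
    (hx : energyH edge hne w x = 0) (u v : V) : x u = x v := by
  refine hconn.eq_of_forall_mem_edge (fun e a ha b hb => ?_) u v
  have h := eRange_eq_zero_of_energyH_eq_zero hw hx e
  unfold eRange at h
  linarith [le_sup' x ha, le_sup' x hb, inf'_le x ha, inf'_le x hb]

theorem isLinearMap_Bmap : IsLinearMap ℝ (Bmap : (E → V → ℝ) → V → ℝ) :=
  ⟨fun _ _ => funext fun _ => by simp [Bmap, sum_add_distrib],
    fun _ _ => funext fun _ => by simp [Bmap, mul_sum]⟩

theorem continuous_Bmap : Continuous (Bmap : (E → V → ℝ) → V → ℝ) := by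
  unfold Bmap
  fun_prop

variable [Fintype V]

theorem HConn.exists_pos_mul_sq_norm_le_energyH (hconn : HConn edge) (hw : ∀ e, 0 < w e)
    (v₀ : V) : ∃ m > 0, ∀ x : V → ℝ, x v₀ = 0 → m * ‖x‖ ^ 2 ≤ energyH edge hne w x := by
  set K := Metric.sphere (0 : V → ℝ) 1 ∩ {x | x v₀ = 0}
  have hK : IsCompact K :=
    (isCompact_sphere 0 1).inter_right (isClosed_eq (continuous_apply v₀) continuous_const)
  have hpos : ∀ x ∈ K, 0 < energyH edge hne w x := by
    rintro x ⟨hx1, hx0⟩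
    refine (energyH_nonneg (fun e => (hw e).le) x).lt_of_ne fun h => ?_
    have : x = 0 := funext fun v => (hconn.eq_of_energyH_eq_zero hw h.symm v v₀).trans hx0
    simp [this] at hx1
  obtain ⟨m, hm, hmK⟩ := hK.exists_forall_le' continuous_energyH.continuousOn hpos
  refine ⟨m, hm, fun x hx => ?_⟩
  rcases eq_or_ne x 0 with rfl | hx0
  · simpa using energyH_nonneg (fun e => (hw e).le) 0
  have hnorm : 0 < ‖x‖ := norm_pos_iff.2 hx0
  have hxK : (fun u => ‖x‖⁻¹ * x u + 0) ∈ K := by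
    refine ⟨?_, by simp [hx]⟩
    simp [← smul_eq_mul, ← Pi.smul_def, norm_smul, hnorm.ne']
  have := hmK _ hxK
  rw [energyH_affine (inv_nonneg.2 hnorm.le)] at this
  rw [inv_pow, ← div_eq_inv_mul, le_div_iff₀ (by positivity)] at this
  linarith

theorem continuous_Pobj (s : V → ℝ) : Continuous (Pobj edge hne w s) :=
  continuous_energyH.sub <|
    continuous_finsetSum _ fun v _ => continuous_const.mul (continuous_apply v)

theorem Pobj_add_const {s : V → ℝ} (hs : ∑ v, s v = 0) (x : V → ℝ) (d : ℝ) :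
    Pobj edge hne w s (fun u => x u + d) = Pobj edge hne w s x := by
  have := energyH_affine (edge := edge) (hne := hne) (w := w) zero_le_one d x
  simp only [one_mul, one_pow] at this
  simp only [Pobj, this, mul_add, sum_add_distrib, ← sum_mul, hs, zero_mul, add_zero]

theorem HConn.exists_forall_Pobj_le [Nonempty V] (hconn : HConn edge) (hw : ∀ e, 0 < w e)
    {s : V → ℝ} (hs : ∑ v, s v = 0) : ∃ x, ∀ z, Pobj edge hne w s x ≤ Pobj edge hne w s z := by
  obtain ⟨v₀⟩ := ‹Nonempty V›
  obtain ⟨m, hm, hcoer⟩ := hconn.exists_pos_mul_sq_norm_le_energyH (hne := hne) hw v₀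
  set S := {x : V → ℝ | x v₀ = 0}
  set C := ∑ v, |s v|
  have hlin : ∀ x : V → ℝ, ∑ v, s v * x v ≤ C * ‖x‖ := fun x => by
    rw [sum_mul]
    refine sum_le_sum fun v _ => (le_abs_self _).trans ?_
    rw [abs_mul, ← Real.norm_eq_abs (x v)]
    exact mul_le_mul_of_nonneg_left (norm_le_pi_norm x v) (abs_nonneg _)
  have hfar : ∀ᶠ x in cocompact (V → ℝ) ⊓ 𝓟 S, Pobj edge hne w s 0 ≤ Pobj edge hne w s x := by
    filter_upwards [(tendsto_norm_cocompact_atTop.eventually_ge_atTop (C / m)).filter_mono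
      inf_le_left, mem_inf_of_right (mem_principal_self S)] with x hxR (hxS : x v₀ = 0)
    have h0 : Pobj edge hne w s 0 = 0 := by simp [Pobj, energyH, eRange]
    rw [h0, Pobj, sub_nonneg]
    rw [div_le_iff₀ hm] at hxR
    nlinarith [hlin x, hcoer x hxS, norm_nonneg x]
  obtain ⟨x, -, hx⟩ := (continuous_Pobj s).continuousOn.exists_isMinOn'
    (isClosed_eq (continuous_apply v₀) continuous_const) (show (0 : V → ℝ) ∈ S from rfl) hfar
  refine ⟨x, fun z => ?_⟩
  rw [← Pobj_add_const hs z (-z v₀)]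
  exact hx (show z v₀ + -z v₀ = 0 by ring)

theorem exists_memX0_add_const [DecidableEq V] (hw : ∀ e, 0 ≤ w e) (x : V → ℝ) :
    ∃ d : ℝ, memX0 edge w (fun u => x u + d) := by
  have hdeg : ∀ v, 0 ≤ degw edge w v := fun v => sum_nonneg fun e _ => hw e
  set T := ∑ v, degw edge w v
  by_cases hT : T = 0
  · refine ⟨0, ?_⟩
    have := (sum_eq_zero_iff_of_nonneg fun v _ => hdeg v).1 hT
    simp [memX0, this]
  · refine ⟨-(∑ v, degw edge w v * x v) / T, ?_⟩
    simp only [memX0, mul_add, sum_add_distrib, ← sum_mul]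
    field_simp
    ring

theorem sum_Bmap_mul (η : E → V → ℝ) (x : V → ℝ) :
    ∑ v, Bmap η v * x v = ∑ e, ∑ v, η e v * x v := by
  simp only [Bmap, sum_mul]
  exact sum_comm

theorem neg_Dobj_le_Pobj (hw : ∀ e, 0 < w e) {s : V → ℝ} {η : E → V → ℝ}
    (hη : memY edge η) (hB : Bmap η = s) (x : V → ℝ) :
    -Dobj w η ≤ Pobj edge hne w s x := by
  rw [Pobj, energyH, Dobj, ← hB, sum_Bmap_mul, mul_sum, ← sum_sub_distrib, ← sum_neg_distrib]
  refine sum_le_sum fun e _ => ?_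
  have hinner := sum_mul_le_l1norm_mul_eRange (hne := hne) (hη e) x
  have hsq := sq_nonneg (2 * w e * eRange edge hne x e - l1norm (η e))
  rw [neg_le, le_div_iff₀ (by linarith [hw e])]
  nlinarith [hw e]

theorem Pobj_le_neg_Dobj (hw : ∀ e, 0 < w e) {s x : V → ℝ} {η : E → V → ℝ}
    (hη : ∀ e, η e ∈ dualCell edge hne w x e) (hB : Bmap η = s) :
    Pobj edge hne w s x ≤ -Dobj w η := by
  rw [Pobj, energyH, Dobj, ← hB, sum_Bmap_mul, mul_sum, ← sum_sub_distrib, ← sum_neg_distrib]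
  refine sum_le_sum fun e _ => ?_
  obtain ⟨-, hinner, hl1⟩ := hη e
  have hsq : l1norm (η e) ^ 2 ≤ (2 * (w e * eRange edge hne x e)) ^ 2 :=
    pow_le_pow_left₀ (sum_nonneg fun v _ => abs_nonneg _) hl1 2
  rw [hinner, le_neg, neg_sub, div_le_iff₀ (by linarith [hw e])]
  nlinarith [hw e]

theorem sum_mul_le_of_forall_Pobj_le (hw : ∀ e, 0 ≤ w e) {s x : V → ℝ}
    (hmin : ∀ z, Pobj edge hne w s x ≤ Pobj edge hne w s z) (y : V → ℝ) {a b : E → V}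
    (ha : ∀ e, ∀ u ∈ edge e, x u = (edge e).sup' (hne e) x → y u ≤ y (a e))
    (hb : ∀ e, ∀ u ∈ edge e, x u = (edge e).inf' (hne e) x → y (b e) ≤ y u) :
    ∑ v, s v * y v ≤ ∑ e, w e * eRange edge hne x e * (y (a e) - y (b e)) := by
  set δ : E → ℝ := fun e => y (a e) - y (b e)
  set G := ∑ e, w e * eRange edge hne x e * δ e
  set Q := ∑ e, w e / 2 * δ e ^ 2
  by_contra! hlt
  have hQ : ∀ᶠ t in 𝓝[>] (0 : ℝ), t * Q < ∑ v, s v * y v - G :=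
    (ContinuousAt.eventually_lt (by fun_prop) (by fun_prop) (by simpa using hlt)).filter_mono
      nhdsWithin_le_nhds
  have hR := eventually_all.2 fun e => eventually_eRange_add_smul_le (ha e) (hb e)
  obtain ⟨t, ht, hR, hQ⟩ := (eventually_mem_nhdsWithin.and (hR.and hQ)).exists
  have henergy :
      energyH edge hne w (x + t • y) ≤ energyH edge hne w x + t * G + t * (t * Q) := by
    refine (energyH_le_of_eRange_le hw hR).trans_eq ?_
    simp only [energyH, G, Q, mul_sum, ← sum_add_distrib]
    exact sum_congr rfl fun e _ => by ring
  have hlin : ∑ v, s v * (x + t • y) v = ∑ v, s v * x v + t * ∑ v, s v * y v := by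
    simp only [Pi.add_apply, Pi.smul_apply, smul_eq_mul, mul_add, sum_add_distrib, mul_sum]
    exact congrArg _ (sum_congr rfl fun v _ => by ring)
  have := hmin (x + t • y)
  rw [Pobj, Pobj, hlin] at this
  nlinarith [mul_lt_mul_of_pos_left hQ (show (0 : ℝ) < t from ht)]

theorem exists_dualCell_of_forall_Pobj_le [DecidableEq V] (hw : ∀ e, 0 ≤ w e) {s x : V → ℝ}
    (hmin : ∀ z, Pobj edge hne w s x ≤ Pobj edge hne w s z) :
    ∃ η : E → V → ℝ, (∀ e, η e ∈ dualCell edge hne w x e) ∧ Bmap η = s := by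
  set K := Set.univ.pi fun e => convexHull ℝ (dualGenerators edge hne w x e)
  have hKcompact : IsCompact (Bmap '' K) :=
    (isCompact_univ_pi fun e => (finite_dualGenerators x e).isCompact_convexHull (𝕜 := ℝ)).image
      continuous_Bmap
  have hKconvex : Convex ℝ (Bmap '' K) :=
    (convex_pi fun e _ => convex_convexHull ℝ _).is_linear_image isLinearMap_Bmap
  suffices hs : s ∈ Bmap '' K by
    obtain ⟨η, hη, rfl⟩ := hs
    exact ⟨η, fun e => convexHull_min (dualGenerators_subset_dualCell hw x e)
      (convex_dualCell x e) (hη e (Set.mem_univ e)), rfl⟩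
  by_contra hs
  obtain ⟨f, u, hfK, hfs⟩ := geometric_hahn_banach_closed_point hKconvex hKcompact.isClosed hs
  set y : V → ℝ := fun v => f (Pi.single v 1)
  have hf : ∀ z, f z = ∑ v, z v * y v := fun z => by
    conv_lhs => rw [pi_eq_sum_univ' z]
    simp only [map_sum, map_smul, smul_eq_mul, y]
  choose a ha hxa hya using fun e => (edge e).exists_max_image_of_exists
    (x · = (edge e).sup' (hne e) x) y
    (exists_mem_eq_sup' (hne e) x |>.imp fun _ h => ⟨h.1, h.2.symm⟩)
  choose b hb hxb hyb using fun e => (edge e).exists_max_image_of_exists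
    (x · = (edge e).inf' (hne e) x) (-y)
    (exists_mem_eq_inf' (hne e) x |>.imp fun _ h => ⟨h.1, h.2.symm⟩)
  set η : E → V → ℝ := fun e =>
    (w e * eRange edge hne x e) • (Pi.single (a e) 1 - Pi.single (b e) 1)
  have hηK : η ∈ K := fun e _ =>
    subset_convexHull ℝ _ ⟨a e, ha e, b e, hb e, hxa e, hxb e, rfl⟩
  have hfη : f (Bmap η) = ∑ e, w e * eRange edge hne x e * (y (a e) - y (b e)) := by
    simp only [hf, sum_Bmap_mul, η, sum_smul_single_sub_single_mul]
  have hfirst := sum_mul_le_of_forall_Pobj_le hw hmin y hya fun e u hu hxu =>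
    neg_le_neg_iff.1 (hyb e u hu hxu)
  rw [hf] at hfs
  linarith [hfK _ ⟨η, hηK, rfl⟩]

end Hypergraph

section

variable {V : Type*} [Fintype V] [DecidableEq V] [Nonempty V]
variable {E : Type*} [Fintype E]

theorem stmt3 (edge : E → Finset V) (hne : ∀ e, (edge e).Nonempty)
    (w : E → ℝ) (hw : ∀ e, 0 < w e) (s : V → ℝ)
    (hconn : HConn edge) (hs : ∑ v, s v = 0) :
    ∃ xstar : V → ℝ, ∃ ηstar : E → V → ℝ,
      memX0 edge w xstar ∧
      memY edge ηstar ∧ Bmap ηstar = s ∧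
      (∀ x, memX0 edge w x → Pobj edge hne w s xstar ≤ Pobj edge hne w s x) ∧
      (∀ η, memY edge η → Bmap η = s → Dobj w ηstar ≤ Dobj w η) ∧
      Pobj edge hne w s xstar = - Dobj w ηstar := by
  obtain ⟨x₀, hx₀⟩ := hconn.exists_forall_Pobj_le (hne := hne) hw hs
  obtain ⟨d, hd⟩ := exists_memX0_add_const (fun e => (hw e).le) x₀
  have hmin : ∀ x, Pobj edge hne w s (fun u => x₀ u + d) ≤ Pobj edge hne w s x := by
    rwa [Pobj_add_const hs]
  obtain ⟨η, hηcell, hBη⟩ := exists_dualCell_of_forall_Pobj_le (fun e => (hw e).le) hmin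
  have hηY : memY edge η := fun e => (hηcell e).1
  have hweak : ∀ ζ, memY edge ζ → Bmap ζ = s →
      -Dobj w ζ ≤ Pobj edge hne w s (fun u => x₀ u + d) :=
    fun _ hζ hBζ => neg_Dobj_le_Pobj hw hζ hBζ _
  have hstrong := le_antisymm (Pobj_le_neg_Dobj hw hηcell hBη) (hweak η hηY hBη)
  refine ⟨_, η, hd, hηY, hBη, fun x _ => hmin x, fun ζ hζ hBζ => ?_, hstrong⟩
  linarith [hweak ζ hζ hBζ]

end
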